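/- Let v : ℝ × ℝ³ → ℝ³ be a smooth divergence-free time-dependent vector field, let φ, h : ℝ × ℝ³ → ℝ be smooth scalars advected by v, and let ρ : ℝ × ℝ³ → ℝ be a smooth nowhere-vanishing scalar advected by v (∂ρ/∂t + v·∇ρ = 0). Then the generator W := ρ⁻¹ ∇φ × ∇h of volume-preserving diffeomorphisms is an infinitesimal symmetry of v, i.e. it commutes with the suspended velocity field: ∂W/∂t + (v·∇)W − (W·∇)v = 0 at every point of ℝ × ℝ³. -/

import Mathlib

noncomputable section

open Matrix MeasureTheory

/-- Points of `ℝ³`, as functions `Fin 3 → ℝ`. -/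
abbrev V3 : Type := Fin 3 → ℝ

/-- The `i`-th standard basis vector of `ℝ³`. -/
def e3 (i : Fin 3) : V3 := Pi.single i 1

/-- Time derivative `∂f/∂t` of a time-dependent scalar field on `ℝ × ℝ³`. -/
def dtS (f : ℝ × V3 → ℝ) (q : ℝ × V3) : ℝ :=
  deriv (fun s => f (s, q.2)) q.1

/-- Spatial partial derivative `∂f/∂xᵢ` of a time-dependent scalar field. -/
def pd (i : Fin 3) (f : ℝ × V3 → ℝ) (q : ℝ × V3) : ℝ :=
  fderiv ℝ (fun y => f (q.1, y)) q.2 (e3 i)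

/-- Spatial gradient `∇f`. -/
def grad3 (f : ℝ × V3 → ℝ) (q : ℝ × V3) : V3 := fun i => pd i f q

/-- Time derivative `∂u/∂t` of a time-dependent vector field, componentwise. -/
def dtV (u : ℝ × V3 → V3) (q : ℝ × V3) : V3 := fun i => dtS (fun r => u r i) q

/-- Spatial divergence `∇·u`. -/
def div3 (u : ℝ × V3 → V3) (q : ℝ × V3) : ℝ := ∑ i, pd i (fun r => u r i) q

/-- Spatial curl `∇×u`. -/
def curl3 (u : ℝ × V3 → V3) (q : ℝ × V3) : V3 :=
  ![pd 1 (fun r => u r 2) q - pd 2 (fun r => u r 1) q,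
    pd 2 (fun r => u r 0) q - pd 0 (fun r => u r 2) q,
    pd 0 (fun r => u r 1) q - pd 1 (fun r => u r 0) q]

/-- Directional derivative `(v·∇)w` of a vector field along another. -/
def dirD (v w : ℝ × V3 → V3) (q : ℝ × V3) : V3 :=
  fun i => ∑ j, v q j * pd j (fun r => w r i) q

/-- Advective derivative `v·∇f` of a scalar field along `v`. -/
def adv (v : ℝ × V3 → V3) (f : ℝ × V3 → ℝ) (q : ℝ × V3) : ℝ :=
  ∑ j, v q j * pd j f q

/-! ### Auxiliary calculus lemmas -/

section aux

variable {f g : ℝ × V3 → ℝ} {q : ℝ × V3} {i j : Fin 3}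

lemma hasFDerivAt_sl (q : ℝ × V3) :
    HasFDerivAt (fun z : V3 => ((q.1, z) : ℝ × V3))
      (((0 : V3 →L[ℝ] ℝ)).prod (ContinuousLinearMap.id ℝ V3)) q.2 :=
  HasFDerivAt.prodMk (hasFDerivAt_const q.1 q.2) (hasFDerivAt_id q.2)

lemma hasDerivAt_tl (q : ℝ × V3) :
    HasDerivAt (fun s : ℝ => ((s, q.2) : ℝ × V3)) ((1 : ℝ), (0 : V3)) q.1 :=
  HasDerivAt.prodMk (hasDerivAt_id q.1) (hasDerivAt_const q.1 q.2)

lemma pd_eq (hf : DifferentiableAt ℝ f q) (i : Fin 3) :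
    pd i f q = fderiv ℝ f q (0, e3 i) := by
  have h1 : HasFDerivAt (fun y : V3 => f (q.1, y))
      ((fderiv ℝ f q).comp (((0 : V3 →L[ℝ] ℝ)).prod (ContinuousLinearMap.id ℝ V3))) q.2 :=
    HasFDerivAt.comp q.2 hf.hasFDerivAt (hasFDerivAt_sl q)
  rw [pd, h1.fderiv]; simp

lemma dtS_eq (hf : DifferentiableAt ℝ f q) :
    dtS f q = fderiv ℝ f q (1, 0) := by
  have h1 : HasDerivAt (fun s : ℝ => f (s, q.2)) (fderiv ℝ f q ((1:ℝ), (0:V3))) q.1 :=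
    HasFDerivAt.comp_hasDerivAt q.1 hf.hasFDerivAt (hasDerivAt_tl q)
  rw [dtS, h1.deriv]

lemma pd_clm (F : ℝ × V3 → (ℝ × V3) →L[ℝ] ℝ) (hF : Differentiable ℝ F)
    (w : ℝ × V3) (q : ℝ × V3) (i : Fin 3) :
    pd i (fun r => F r w) q = fderiv ℝ F q (0, e3 i) w := by
  have h1 : HasFDerivAt (fun y : V3 => F (q.1, y))
      ((fderiv ℝ F q).comp (((0 : V3 →L[ℝ] ℝ)).prod (ContinuousLinearMap.id ℝ V3))) q.2 :=
    HasFDerivAt.comp q.2 (hF q).hasFDerivAt (hasFDerivAt_sl q)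
  have h2 := h1.clm_apply (hasFDerivAt_const w q.2)
  rw [pd, h2.fderiv]; simp

lemma dtS_clm (F : ℝ × V3 → (ℝ × V3) →L[ℝ] ℝ) (hF : Differentiable ℝ F)
    (w : ℝ × V3) (q : ℝ × V3) :
    dtS (fun r => F r w) q = fderiv ℝ F q (1, 0) w := by
  have h1 : HasDerivAt (fun s : ℝ => F (s, q.2)) (fderiv ℝ F q ((1:ℝ), (0:V3))) q.1 :=
    HasFDerivAt.comp_hasDerivAt q.1 (hF q).hasFDerivAt (hasDerivAt_tl q)
  have h2 := h1.clm_apply (hasDerivAt_const q.1 w)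
  rw [dtS, h2.deriv]; simp

lemma diff_fderiv (hf : ContDiff ℝ (⊤ : ℕ∞) f) : Differentiable ℝ (fderiv ℝ f) :=
  (hf.fderiv_right (m := 1) (WithTop.coe_le_coe.mpr le_top)).differentiable one_ne_zero

lemma pd_fun (hf : ContDiff ℝ (⊤ : ℕ∞) f) (j : Fin 3) :
    pd j f = fun r => fderiv ℝ f r (0, e3 j) :=
  funext fun r => pd_eq ((hf.differentiable (by simp)) r) j

lemma dtS_fun (hf : ContDiff ℝ (⊤ : ℕ∞) f) :
    dtS f = fun r => fderiv ℝ f r (1, 0) :=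
  funext fun r => dtS_eq ((hf.differentiable (by simp)) r)

lemma sym2 (hf : ContDiff ℝ (⊤ : ℕ∞) f) (q : ℝ × V3) (a b : ℝ × V3) :
    fderiv ℝ (fderiv ℝ f) q a b = fderiv ℝ (fderiv ℝ f) q b a :=
  (hf.contDiffAt.isSymmSndFDerivAt (by rw [minSmoothness_of_isRCLikeNormedField]; exact WithTop.coe_le_coe.mpr le_top)) a b

lemma diff_pd (hf : ContDiff ℝ (⊤ : ℕ∞) f) (j : Fin 3) : Differentiable ℝ (pd j f) := by
  rw [pd_fun hf j]
  exact (diff_fderiv hf).clm_apply (differentiable_const _)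

lemma diff_dtS (hf : ContDiff ℝ (⊤ : ℕ∞) f) : Differentiable ℝ (dtS f) := by
  rw [dtS_fun hf]
  exact (diff_fderiv hf).clm_apply (differentiable_const _)

lemma pd_pd (hf : ContDiff ℝ (⊤ : ℕ∞) f) (i j : Fin 3) (q : ℝ × V3) :
    pd i (pd j f) q = fderiv ℝ (fderiv ℝ f) q (0, e3 i) (0, e3 j) := by
  rw [pd_fun hf j, pd_clm _ (diff_fderiv hf)]

lemma dtS_pd (hf : ContDiff ℝ (⊤ : ℕ∞) f) (j : Fin 3) (q : ℝ × V3) :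
    dtS (pd j f) q = fderiv ℝ (fderiv ℝ f) q (1, 0) (0, e3 j) := by
  rw [pd_fun hf j, dtS_clm _ (diff_fderiv hf)]

lemma pd_dtS (hf : ContDiff ℝ (⊤ : ℕ∞) f) (i : Fin 3) (q : ℝ × V3) :
    pd i (dtS f) q = fderiv ℝ (fderiv ℝ f) q (0, e3 i) (1, 0) := by
  rw [dtS_fun hf, pd_clm _ (diff_fderiv hf)]

lemma dtS_pd_comm (hf : ContDiff ℝ (⊤ : ℕ∞) f) (j : Fin 3) (q : ℝ × V3) :
    dtS (pd j f) q = pd j (dtS f) q := by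
  rw [dtS_pd hf, pd_dtS hf, sym2 hf]

lemma pd_pd_comm (hf : ContDiff ℝ (⊤ : ℕ∞) f) (i j : Fin 3) (q : ℝ × V3) :
    pd i (pd j f) q = pd j (pd i f) q := by
  rw [pd_pd hf, pd_pd hf, sym2 hf]

lemma diffX (hf : Differentiable ℝ f) (q : ℝ × V3) :
    DifferentiableAt ℝ (fun y => f (q.1, y)) q.2 :=
  (hf q).comp q.2 (DifferentiableAt.prodMk (differentiableAt_const q.1) differentiableAt_id)

lemma diffT (hf : Differentiable ℝ f) (q : ℝ × V3) :
    DifferentiableAt ℝ (fun s => f (s, q.2)) q.1 :=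
  (hf q).comp q.1 (DifferentiableAt.prodMk differentiableAt_id (differentiableAt_const q.2))

lemma pd_add (hf : Differentiable ℝ f) (hg : Differentiable ℝ g) :
    pd i (fun r => f r + g r) q = pd i f q + pd i g q := by
  simp only [pd]
  rw [fderiv_fun_add (diffX hf q) (diffX hg q), ContinuousLinearMap.add_apply]

lemma pd_sub (hf : Differentiable ℝ f) (hg : Differentiable ℝ g) :
    pd i (fun r => f r - g r) q = pd i f q - pd i g q := by
  simp only [pd]
  rw [fderiv_fun_sub (diffX hf q) (diffX hg q), ContinuousLinearMap.sub_apply]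

lemma pd_mul (hf : Differentiable ℝ f) (hg : Differentiable ℝ g) :
    pd i (fun r => f r * g r) q = pd i f q * g q + f q * pd i g q := by
  simp only [pd]
  rw [fderiv_fun_mul (diffX hf q) (diffX hg q)]
  simp only [ContinuousLinearMap.add_apply, ContinuousLinearMap.smul_apply, smul_eq_mul]
  ring

lemma pd_inv (hf : Differentiable ℝ f) (hf0 : ∀ r, f r ≠ 0) :
    pd i (fun r => (f r)⁻¹) q = -((f q) ^ 2)⁻¹ * pd i f q := by
  have h1 : HasFDerivAt (fun y : V3 => (f (q.1, y))⁻¹)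
      ((-((f q) ^ 2)⁻¹) • fderiv ℝ (fun y : V3 => f (q.1, y)) q.2) q.2 :=
    (hasDerivAt_inv (hf0 q)).comp_hasFDerivAt q.2 (diffX hf q).hasFDerivAt
  simp only [pd]
  rw [h1.fderiv]
  simp [pd]

lemma dtS_sub (hf : Differentiable ℝ f) (hg : Differentiable ℝ g) :
    dtS (fun r => f r - g r) q = dtS f q - dtS g q := by
  simp only [dtS]
  exact deriv_sub (diffT hf q) (diffT hg q)

lemma dtS_mul (hf : Differentiable ℝ f) (hg : Differentiable ℝ g) :
    dtS (fun r => f r * g r) q = dtS f q * g q + f q * dtS g q := by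
  simp only [dtS]
  exact deriv_mul (diffT hf q) (diffT hg q)

lemma dtS_inv (hf : Differentiable ℝ f) (hf0 : ∀ r, f r ≠ 0) :
    dtS (fun r => (f r)⁻¹) q = -((f q) ^ 2)⁻¹ * dtS f q := by
  simp only [dtS]
  rw [deriv_fun_inv'' (diffT hf q) (hf0 q)]
  ring

lemma contDiff_comp3 {v : ℝ × V3 → V3} (hv : ContDiff ℝ (⊤ : ℕ∞) v) (j : Fin 3) :
    ContDiff ℝ (⊤ : ℕ∞) (fun r => v r j) :=
  (ContinuousLinearMap.proj (R := ℝ) (φ := fun _ : Fin 3 => ℝ) j).contDiff.comp hv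

/-- Material derivative of a partial derivative of an advected scalar. -/
lemma Lgrad (v : ℝ × V3 → V3) (f : ℝ × V3 → ℝ) (hv : ContDiff ℝ (⊤ : ℕ∞) v)
    (hf : ContDiff ℝ (⊤ : ℕ∞) f) (hadv : ∀ q, dtS f q + adv v f q = 0) (k : Fin 3) (q : ℝ × V3) :
    dtS (pd k f) q =
      -(v q 0 * pd 0 (pd k f) q + v q 1 * pd 1 (pd k f) q + v q 2 * pd 2 (pd k f) q)
      - (pd k (fun r => v r 0) q * pd 0 f q + pd k (fun r => v r 1) q * pd 1 f q
         + pd k (fun r => v r 2) q * pd 2 f q) := by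
  have dv0 : Differentiable ℝ (fun r => v r 0) := (contDiff_comp3 hv 0).differentiable (by simp)
  have dv1 : Differentiable ℝ (fun r => v r 1) := (contDiff_comp3 hv 1).differentiable (by simp)
  have dv2 : Differentiable ℝ (fun r => v r 2) := (contDiff_comp3 hv 2).differentiable (by simp)
  have dp : ∀ m : Fin 3, Differentiable ℝ (pd m f) := fun m => diff_pd hf m
  have hzero : (fun q' => dtS f q' +
      (v q' 0 * pd 0 f q' + v q' 1 * pd 1 f q' + v q' 2 * pd 2 f q')) = (fun _ => (0:ℝ)) := by
    funext q'
    have := hadv q'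
    rw [adv, Fin.sum_univ_three] at this
    exact this
  have h0 : pd k (fun q' => dtS f q' +
      (v q' 0 * pd 0 f q' + v q' 1 * pd 1 f q' + v q' 2 * pd 2 f q')) q = 0 := by
    rw [hzero]; simp [pd]
  rw [pd_add (diff_dtS hf) (((dv0.fun_mul (dp 0)).fun_add (dv1.fun_mul (dp 1))).fun_add (dv2.fun_mul (dp 2))),
      pd_add ((dv0.fun_mul (dp 0)).fun_add (dv1.fun_mul (dp 1))) (dv2.fun_mul (dp 2)),
      pd_add (dv0.fun_mul (dp 0)) (dv1.fun_mul (dp 1)),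
      pd_mul dv0 (dp 0), pd_mul dv1 (dp 1), pd_mul dv2 (dp 2),
      ← dtS_pd_comm hf k q,
      pd_pd_comm hf k 0 q, pd_pd_comm hf k 1 q, pd_pd_comm hf k 2 q] at h0
  linarith

/-- Time derivative of a component of `ρ⁻¹ ∇φ × ∇h`. -/
lemma dtS_W (φ h ρ : ℝ × V3 → ℝ) (hφ : ContDiff ℝ (⊤ : ℕ∞) φ) (hh : ContDiff ℝ (⊤ : ℕ∞) h)
    (hρ : ContDiff ℝ (⊤ : ℕ∞) ρ) (hρ0 : ∀ q, ρ q ≠ 0) (a b c d : Fin 3) (q : ℝ × V3) :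
    dtS (fun r => (ρ r)⁻¹ * (pd a φ r * pd b h r - pd c φ r * pd d h r)) q =
      -((ρ q) ^ 2)⁻¹ * dtS ρ q * (pd a φ q * pd b h q - pd c φ q * pd d h q)
      + (ρ q)⁻¹ * ((dtS (pd a φ) q * pd b h q + pd a φ q * dtS (pd b h) q)
                 - (dtS (pd c φ) q * pd d h q + pd c φ q * dtS (pd d h) q)) := by
  have dρ : Differentiable ℝ ρ := hρ.differentiable (by simp)
  have dinv : Differentiable ℝ (fun r => (ρ r)⁻¹) := dρ.inv hρ0
  have d1 : Differentiable ℝ (fun r => pd a φ r * pd b h r) := (diff_pd hφ a).mul (diff_pd hh b)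
  have d2 : Differentiable ℝ (fun r => pd c φ r * pd d h r) := (diff_pd hφ c).mul (diff_pd hh d)
  rw [dtS_mul dinv (d1.fun_sub d2), dtS_inv dρ hρ0, dtS_sub d1 d2,
      dtS_mul (diff_pd hφ a) (diff_pd hh b), dtS_mul (diff_pd hφ c) (diff_pd hh d)]

/-- Spatial derivative of a component of `ρ⁻¹ ∇φ × ∇h`. -/
lemma pd_W (φ h ρ : ℝ × V3 → ℝ) (hφ : ContDiff ℝ (⊤ : ℕ∞) φ) (hh : ContDiff ℝ (⊤ : ℕ∞) h)
    (hρ : ContDiff ℝ (⊤ : ℕ∞) ρ) (hρ0 : ∀ q, ρ q ≠ 0) (j a b c d : Fin 3) (q : ℝ × V3) :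
    pd j (fun r => (ρ r)⁻¹ * (pd a φ r * pd b h r - pd c φ r * pd d h r)) q =
      -((ρ q) ^ 2)⁻¹ * pd j ρ q * (pd a φ q * pd b h q - pd c φ q * pd d h q)
      + (ρ q)⁻¹ * ((pd j (pd a φ) q * pd b h q + pd a φ q * pd j (pd b h) q)
                 - (pd j (pd c φ) q * pd d h q + pd c φ q * pd j (pd d h) q)) := by
  have dρ : Differentiable ℝ ρ := hρ.differentiable (by simp)
  have dinv : Differentiable ℝ (fun r => (ρ r)⁻¹) := dρ.inv hρ0
  have d1 : Differentiable ℝ (fun r => pd a φ r * pd b h r) := (diff_pd hφ a).mul (diff_pd hh b)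
  have d2 : Differentiable ℝ (fun r => pd c φ r * pd d h r) := (diff_pd hφ c).mul (diff_pd hh d)
  rw [pd_mul dinv (d1.fun_sub d2), pd_inv dρ hρ0, pd_sub d1 d2,
      pd_mul (diff_pd hφ a) (diff_pd hh b), pd_mul (diff_pd hφ c) (diff_pd hh d)]

end aux

/-- Let `v` be smooth and divergence-free, let `φ, h` be smooth scalars
advected by `v`, and let `ρ` be a smooth nowhere-vanishing scalar advected by `v`. Then
`W = ρ⁻¹ ∇φ × ∇h` commutes with the suspended velocity field:
`∂W/∂t + (v·∇)W − (W·∇)v = 0` everywhere. -/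
theorem generator_commutes_with_suspension
    (v : ℝ × V3 → V3) (φ h ρ : ℝ × V3 → ℝ)
    (hv : ContDiff ℝ (⊤ : ℕ∞) v) (hφ : ContDiff ℝ (⊤ : ℕ∞) φ) (hh : ContDiff ℝ (⊤ : ℕ∞) h)
    (hρ : ContDiff ℝ (⊤ : ℕ∞) ρ) (hρ0 : ∀ q, ρ q ≠ 0)
    (hdiv : ∀ q, div3 v q = 0)
    (haφ : ∀ q, dtS φ q + adv v φ q = 0)
    (hah : ∀ q, dtS h q + adv v h q = 0)
    (haρ : ∀ q, dtS ρ q + adv v ρ q = 0) :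
    ∀ q i, dtV (fun r => (ρ r)⁻¹ • crossProduct (grad3 φ r) (grad3 h r)) q i
      + dirD v (fun r => (ρ r)⁻¹ • crossProduct (grad3 φ r) (grad3 h r)) q i
      - dirD (fun r => (ρ r)⁻¹ • crossProduct (grad3 φ r) (grad3 h r)) v q i = 0 := by
  intro q i
  have Eφ := fun (k : Fin 3) => Lgrad v φ hv hφ haφ k q
  have Eh := fun (k : Fin 3) => Lgrad v h hv hh hah k q
  have Eρ : dtS ρ q = -(v q 0 * pd 0 ρ q + v q 1 * pd 1 ρ q + v q 2 * pd 2 ρ q) := by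
    have := haρ q
    rw [adv, Fin.sum_univ_three] at this
    linarith
  have hA : pd 2 (fun r => v r 2) q
      = -pd 0 (fun r => v r 0) q - pd 1 (fun r => v r 1) q := by
    have := hdiv q
    rw [div3, Fin.sum_univ_three] at this
    linarith
  fin_cases i
  · simp only [dtV, dirD, Pi.smul_apply, smul_eq_mul, cross_apply, grad3,
      Fin.sum_univ_three, Matrix.cons_val_zero, Matrix.cons_val_one, Matrix.head_cons,
      Matrix.cons_val_two, Matrix.tail_cons, Fin.isValue, Fin.zero_eta]
    rw [dtS_W φ h ρ hφ hh hρ hρ0 1 2 2 1 q,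
        pd_W φ h ρ hφ hh hρ hρ0 0 1 2 2 1 q,
        pd_W φ h ρ hφ hh hρ hρ0 1 1 2 2 1 q,
        pd_W φ h ρ hφ hh hρ hρ0 2 1 2 2 1 q]
    simp only [Eφ 1, Eφ 2, Eh 1, Eh 2, Eρ, hA]
    ring
  · simp only [dtV, dirD, Pi.smul_apply, smul_eq_mul, cross_apply, grad3,
      Fin.sum_univ_three, Matrix.cons_val_zero, Matrix.cons_val_one, Matrix.head_cons,
      Matrix.cons_val_two, Matrix.tail_cons, Fin.isValue, Fin.mk_one]
    rw [dtS_W φ h ρ hφ hh hρ hρ0 2 0 0 2 q,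
        pd_W φ h ρ hφ hh hρ hρ0 0 2 0 0 2 q,
        pd_W φ h ρ hφ hh hρ hρ0 1 2 0 0 2 q,
        pd_W φ h ρ hφ hh hρ hρ0 2 2 0 0 2 q]
    simp only [Eφ 0, Eφ 2, Eh 0, Eh 2, Eρ, hA]
    ring
  · simp only [dtV, dirD, Pi.smul_apply, smul_eq_mul, cross_apply, grad3,
      Fin.sum_univ_three, Matrix.cons_val_zero, Matrix.cons_val_one, Matrix.head_cons,
      Matrix.cons_val_two, Matrix.tail_cons, Fin.isValue, Fin.reduceFinMk]
    rw [dtS_W φ h ρ hφ hh hρ hρ0 0 1 1 0 q,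
        pd_W φ h ρ hφ hh hρ hρ0 0 0 1 1 0 q,
        pd_W φ h ρ hφ hh hρ hρ0 1 0 1 1 0 q,
        pd_W φ h ρ hφ hh hρ hρ0 2 0 1 1 0 q]
    simp only [Eφ 0, Eφ 1, Eh 0, Eh 1, Eρ, hA]
    ring
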